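/- Let T ≥ 2 be a natural number and p₀ ≥ 0 a real number, and for natural t set b(t) = (4/9)·(1 - t/T)². Let D : ℕ → ℝ satisfy D(t + 1) = b(t)·(D(t) + p₀) for all 1 ≤ t ≤ T - 1. Then for every natural number t with 1 ≤ t ≤ T - 1, |D(t + 1) - b(t + 1)·p₀/(1 - b(t + 1))| ≤ (4/9)·|D(t) - b(t)·p₀/(1 - b(t))| + (36·p₀/25)·(2T - 2t - 1)/T². -/

import Mathlib

/-!
Write `f(β) = β p / (1 - β)` for the fixed point of `x ↦ β (x + p)`. Since `f(β) = β (f(β) + p)`,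
one step of the recursion gives `D(t+1) - f(b(t+1)) = b(t) (D(t) - f(b(t))) + (f(b(t)) - f(b(t+1)))`.
The first term contracts because `b ≤ 4/9`; the second is the drift of the fixed point, and
`f(β) - f(β') = p (β - β') / ((1 - β)(1 - β'))` with `(1 - β)(1 - β') ≥ (5/9)²`, while
`b(t) - b(t+1) = (4/9)(2T - 2t - 1)/T²`.
-/

theorem mul_add_sub_fixedPoint {β β' p : ℝ} (hβ : β ≠ 1) (x : ℝ) :
    β * (x + p) - β' * p / (1 - β')
      = β * (x - β * p / (1 - β)) + (β * p / (1 - β) - β' * p / (1 - β')) := by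
  have hfix : β * p / (1 - β) = β * (β * p / (1 - β) + p) := by
    field_simp [sub_ne_zero.mpr hβ.symm]
    ring
  linear_combination -hfix

theorem abs_fixedPoint_sub_fixedPoint_le {β β' c p : ℝ} (hp : 0 ≤ p) (hc : c < 1)
    (hβ : β ≤ c) (hβ' : β' ≤ c) :
    |β * p / (1 - β) - β' * p / (1 - β')| ≤ p * |β - β'| / (1 - c) ^ 2 := by
  have hβ1 : 0 < 1 - β := by linarith
  have hβ'1 : 0 < 1 - β' := by linarith
  have hdiff : β * p / (1 - β) - β' * p / (1 - β') = p * (β - β') / ((1 - β) * (1 - β')) := by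
    field_simp
    ring
  rw [hdiff, abs_div, abs_mul, abs_of_nonneg hp, abs_of_pos (mul_pos hβ1 hβ'1), sq]
  gcongr

theorem abs_step_sub_fixedPoint_le {β β' c p : ℝ} (x : ℝ) (hp : 0 ≤ p) (hc : c < 1)
    (hβ₀ : 0 ≤ β) (hβ : β ≤ c) (hβ' : β' ≤ c) :
    |β * (x + p) - β' * p / (1 - β')|
      ≤ c * |x - β * p / (1 - β)| + p * |β - β'| / (1 - c) ^ 2 := by
  rw [mul_add_sub_fixedPoint (by linarith) x]
  calc _ ≤ |β * (x - β * p / (1 - β))| + |β * p / (1 - β) - β' * p / (1 - β')| :=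
        abs_add_le _ _
    _ ≤ c * |x - β * p / (1 - β)| + p * |β - β'| / (1 - c) ^ 2 := by
        rw [abs_mul, abs_of_nonneg hβ₀]
        gcongr
        exact abs_fixedPoint_sub_fixedPoint_le hp hc hβ hβ'

theorem mul_one_sub_div_sq_mem_Icc {a s T : ℝ} (ha : 0 ≤ a) (hs : 0 ≤ s) (hsT : s ≤ T) :
    a * (1 - s / T) ^ 2 ∈ Set.Icc 0 a := by
  have h₀ : 0 ≤ 1 - s / T := sub_nonneg.mpr (div_le_one_of_le₀ hsT (hs.trans hsT))
  have h₁ : 1 - s / T ≤ 1 := sub_le_self _ (div_nonneg hs (hs.trans hsT))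
  exact ⟨by positivity, mul_le_of_le_one_right ha (pow_le_one₀ h₀ h₁)⟩

theorem mul_one_sub_div_sq_sub_succ {a s T : ℝ} (hT : T ≠ 0) :
    a * (1 - s / T) ^ 2 - a * (1 - (s + 1) / T) ^ 2 = a * ((2 * T - 2 * s - 1) / T ^ 2) := by
  field_simp
  ring

theorem gwo_variance_recursion_contraction
    (T : ℕ) (p₀ : ℝ) (hp₀ : 0 ≤ p₀)
    (b : ℕ → ℝ) (hb : ∀ t : ℕ, b t = (4/9) * (1 - (t : ℝ) / (T : ℝ))^2)
    (D : ℕ → ℝ)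
    (hrec : ∀ t : ℕ, 1 ≤ t → t ≤ T - 1 → D (t + 1) = b t * (D t + p₀)) :
    ∀ t : ℕ, 1 ≤ t → t ≤ T - 1 →
      |D (t + 1) - b (t + 1) * p₀ / (1 - b (t + 1))|
        ≤ (4/9) * |D t - b t * p₀ / (1 - b t)|
          + (36 * p₀ / 25) * (2 * (T : ℝ) - 2 * (t : ℝ) - 1) / (T : ℝ)^2 := by
  intro t ht₁ ht₂
  have htT : (t : ℝ) + 1 ≤ T := by exact_mod_cast (by omega : t + 1 ≤ T)
  have hT : (T : ℝ) ≠ 0 := by linarith [t.cast_nonneg (α := ℝ)]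
  have hbt : b t ∈ Set.Icc 0 (4/9) := by
    rw [hb]
    exact mul_one_sub_div_sq_mem_Icc (by norm_num) t.cast_nonneg (by linarith)
  have hbt' : b (t + 1) ∈ Set.Icc 0 (4/9) := by
    rw [hb, Nat.cast_succ]
    exact mul_one_sub_div_sq_mem_Icc (by norm_num) (by positivity) htT
  have hdrift : b t - b (t + 1) = 4/9 * ((2 * T - 2 * t - 1) / T ^ 2) := by
    rw [hb, hb, Nat.cast_succ]
    exact mul_one_sub_div_sq_sub_succ hT
  have hdrift₀ : 0 ≤ b t - b (t + 1) := by
    rw [hdrift]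
    have : (0 : ℝ) ≤ 2 * T - 2 * t - 1 := by linarith
    positivity
  rw [hrec t ht₁ ht₂]
  refine (abs_step_sub_fixedPoint_le (D t) hp₀ (by norm_num) hbt.1 hbt.2 hbt'.2).trans_eq ?_
  rw [abs_of_nonneg hdrift₀, hdrift]
  ring
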